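/- Let (X, f_X), (Y, f_Y) and (Ỹ, f_Ỹ) be spaces under A, and let (φ, ψ, G, H, K, L) be a homotopy equivalence from (Y, f_Y) to (Ỹ, f_Ỹ). Define Φ : Map_f^h(X,Y) → Map_f^h(X,Ỹ) by Φ(g,F) = (φ∘g, K·(φ∘F)) and Ψ : Map_f^h(X,Ỹ) → Map_f^h(X,Y) by Ψ(g̃,F̃) = (ψ∘g̃, L·(ψ∘F̃)). Then Φ and Ψ are well-defined continuous maps and are inverse homotopy equivalences: Ψ∘Φ is homotopic to the identity of Map_f^h(X,Y) and Φ∘Ψ is homotopic to the identity of Map_f^h(X,Ỹ). -/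

import Mathlib

open unitInterval

/-- The set of endpoints `{0,1} × A ⊆ I × A`, used for homotopies rel endpoints. -/
def relEnds (A : Type) [TopologicalSpace A] : Set (I × A) :=
  {p | p.1 = 0 ∨ p.1 = 1}

/-- A homotopy equivalence from `(Y, f_Y)` to `(Ỹ, f_Ỹ)` (spaces under `A`). -/
structure UnderHtpyEquiv {A Y Y' : Type} [TopologicalSpace A] [TopologicalSpace Y]
    [TopologicalSpace Y'] (fY : C(A, Y)) (fY' : C(A, Y')) where
  φ : C(Y, Y')
  ψ : C(Y', Y)
  G : ContinuousMap.Homotopy (ψ.comp φ) (ContinuousMap.id Y)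
  H : ContinuousMap.Homotopy (φ.comp ψ) (ContinuousMap.id Y')
  K : ContinuousMap.Homotopy (φ.comp fY) fY'
  L : ContinuousMap.Homotopy (ψ.comp fY') fY
  rel_left : ContinuousMap.HomotopicRel
    (((ContinuousMap.Homotopy.refl ψ).comp K).trans L).toContinuousMap
    (G.comp (ContinuousMap.Homotopy.refl fY)).toContinuousMap
    (relEnds A)
  rel_right : ContinuousMap.HomotopicRel
    (((ContinuousMap.Homotopy.refl φ).comp L).trans K).toContinuousMap
    (H.comp (ContinuousMap.Homotopy.refl fY')).toContinuousMap
    (relEnds A)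

/-- `Map_f^h(X,Y)`: the space of pairs `(g, F)` where `g : X → Y` is continuous and
`F` is a homotopy from `g ∘ f_X` to `f_Y`, topologized as a subspace of
`C(X,Y) × C(I × A, Y)` with compact-open topologies. -/
abbrev MapH {A X Y : Type} [TopologicalSpace A] [TopologicalSpace X] [TopologicalSpace Y]
    (fX : C(A, X)) (fY : C(A, Y)) : Type :=
  {gH : C(X, Y) × C(I × A, Y) //
    (∀ a, gH.2 (0, a) = gH.1 (fX a)) ∧ ∀ a, gH.2 (1, a) = fY a}

/-!
Write `Φ = (φ, K)_*` and `Ψ = (ψ, L)_*`. On `(g, F)` the composite `Ψ ∘ Φ` gives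
`(ψφg, L · ψ(K · φF))`. Reassociating, and then replacing `L · ψK` by `G f_Y` through the
relative homotopy `rel_left`, deforms this with `g` fixed into `(ψφg, G f_Y · ψφF)`. Sliding
along `G` contracts that to `(g, const · F)`, and a reparametrization removes the constant path.
These deformations are formulas in `(g, F)`, continuous on `Map_f^h(X, Y)` because evaluation is
continuous for locally compact `X` and `A`. Swapping the two halves of the equivalence gives
`Φ ∘ Ψ ≃ id`.
-/

namespace ContinuousMap.Homotopy

variable {Z W V : Type} [TopologicalSpace Z] [TopologicalSpace W] [TopologicalSpace V]

theorem evalAt_trans {f₀ f₁ f₂ : C(Z, W)} (F : Homotopy f₀ f₁) (G : Homotopy f₁ f₂) (z : Z) :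
    (F.trans G).evalAt z = (F.evalAt z).trans (G.evalAt z) := by
  ext t
  simp [trans_apply, Path.trans_apply]

theorem evalAt_refl (f : C(Z, W)) (z : Z) : (Homotopy.refl f).evalAt z = Path.refl (f z) := rfl

theorem refl_comp_trans (g : C(W, V)) {f₀ f₁ f₂ : C(Z, W)} (F : Homotopy f₀ f₁)
    (G : Homotopy f₁ f₂) :
    (Homotopy.refl g).comp (F.trans G) =
      ((Homotopy.refl g).comp F).trans ((Homotopy.refl g).comp G) := by
  ext x
  simp only [trans_apply, comp_apply, refl_apply]
  split_ifs <;> rfl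

theorem trans_trans_apply {f₀ f₁ f₂ f₃ : C(Z, W)} (F : Homotopy f₀ f₁) (G : Homotopy f₁ f₂)
    (H : Homotopy f₂ f₃) (x : I × Z) :
    (F.trans G).trans H x = F.trans (G.trans H)
      (⟨Path.Homotopy.transAssocReparamAux x.1, Path.Homotopy.transAssocReparamAux_mem_I _⟩,
        x.2) := by
  have h := congrArg (· x.1)
    (Path.Homotopy.trans_assoc_reparam (F.evalAt x.2) (G.evalAt x.2) (H.evalAt x.2))
  simp only [← evalAt_trans] at h
  exact h

theorem trans_refl_apply {f₀ f₁ : C(Z, W)} (F : Homotopy f₀ f₁) (x : I × Z) :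
    F.trans (Homotopy.refl f₁) x =
      F (⟨Path.Homotopy.transReflReparamAux x.1, Path.Homotopy.transReflReparamAux_mem_I _⟩,
        x.2) := by
  have h := congrArg (· x.1) (Path.Homotopy.trans_refl_reparam (F.evalAt x.2))
  rw [← evalAt_refl, ← evalAt_trans] at h
  exact h

theorem homotopicRel_of_reparam {f₀ f₁ : C(Z, W)} {F₀ F₁ : Homotopy f₀ f₁} {r : I → I}
    (hr : Continuous r) (hr₀ : r 0 = 0) (hr₁ : r 1 = 1)
    (h : ∀ x : I × Z, F₀ x = F₁ (r x.1, x.2)) :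
    F₀.toContinuousMap.HomotopicRel F₁.toContinuousMap (relEnds Z) := by
  refine HomotopicRel.symm ⟨{
    toFun := fun y => Path.Homotopy.reparam (F₁.evalAt y.2.2) r hr hr₀ hr₁ (y.1, y.2.1)
    continuous_toFun := F₁.continuous.comp (.prodMk (.subtype_mk (by fun_prop) _) (by fun_prop))
    map_zero_left := fun x => by simp
    map_one_left := fun x => by simp [h]
    prop' := ?_ }⟩
  rintro t ⟨s, z⟩ (rfl | rfl : s = 0 ∨ s = 1) <;> simp

theorem homotopicRel_comp_refl {f₀ f₁ : C(V, W)} {F₀ F₁ : Homotopy f₀ f₁}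
    (h : F₀.toContinuousMap.HomotopicRel F₁.toContinuousMap (relEnds V)) (k : C(Z, V)) :
    (F₀.comp (.refl k)).toContinuousMap.HomotopicRel (F₁.comp (.refl k)).toContinuousMap
      (relEnds Z) :=
  h.map fun Γ => { toHomotopy := Γ.toHomotopy.comp (.refl (.prodMap (.id I) k)),
                   prop' := fun t x hx => Γ.prop t (x.1, k x.2) hx }

theorem homotopicRel_trans_right {f₀ f₁ f₂ : C(Z, W)} (F : Homotopy f₀ f₁)
    {G₀ G₁ : Homotopy f₁ f₂}
    (h : G₀.toContinuousMap.HomotopicRel G₁.toContinuousMap (relEnds Z)) :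
    (F.trans G₀).toContinuousMap.HomotopicRel (F.trans G₁).toContinuousMap (relEnds Z) := by
  obtain ⟨Γ⟩ := h
  refine ⟨{
    toFun := fun y => if (y.2.1 : ℝ) ≤ 1 / 2 then F (Set.projIcc 0 1 zero_le_one (2 * y.2.1), y.2.2)
      else Γ (y.1, (Set.projIcc 0 1 zero_le_one (2 * y.2.1 - 1), y.2.2))
    continuous_toFun := continuous_if_le (by fun_prop) continuous_const
      (F.continuous.comp (by fun_prop)).continuousOn
      (Γ.continuous.comp (by fun_prop)).continuousOn fun y hy => by
        simp [hy, Γ.eq_fst y.1 (x := (0, y.2.2)) (.inl rfl)]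
    map_zero_left := fun x => by simp only [Γ.apply_zero]; rfl
    map_one_left := fun x => by simp only [Γ.apply_one]; rfl
    prop' := ?_ }⟩
  rintro t ⟨s, z⟩ (rfl | rfl : s = 0 ∨ s = 1)
  · simp
  · norm_num [Γ.eq_fst t (x := (1, z)) (.inr rfl)]

end ContinuousMap.Homotopy

def UnderHtpyEquiv.symm {A Y Y' : Type} [TopologicalSpace A] [TopologicalSpace Y]
    [TopologicalSpace Y'] {fY : C(A, Y)} {fY' : C(A, Y')} (E : UnderHtpyEquiv fY fY') :
    UnderHtpyEquiv fY' fY where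
  φ := E.ψ
  ψ := E.φ
  G := E.H
  H := E.G
  K := E.L
  L := E.K
  rel_left := E.rel_right
  rel_right := E.rel_left

namespace MapH

open ContinuousMap

variable {A X Y P : Type} [TopologicalSpace A] [TopologicalSpace X] [TopologicalSpace Y]
  [TopologicalSpace P] {fX : C(A, X)} {fY : C(A, Y)}

theorem ext {p q : MapH fX fY} (h₁ : ∀ x, p.1.1 x = q.1.1 x) (h₂ : ∀ y, p.1.2 y = q.1.2 y) :
    p = q :=
  Subtype.ext (Prod.ext (ContinuousMap.ext h₁) (ContinuousMap.ext h₂))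

def lift (g : C(P × X, Y)) (F : (g.comp (.prodMap (.id P) fX)).Homotopy (fY.comp .snd)) :
    C(P, MapH fX fY) where
  toFun p := ⟨(g.curry p,
      (F.toContinuousMap.comp ⟨fun y : P × (I × A) => (y.2.1, (y.1, y.2.2)), by fun_prop⟩).curry p),
    fun a => F.apply_zero (p, a), fun a => F.apply_one (p, a)⟩
  continuous_toFun := (g.curry.continuous.prodMk (ContinuousMap.curry _).continuous).subtype_mk _

@[simp]
theorem lift_apply_snd (g : C(P × X, Y))
    (F : (g.comp (.prodMap (.id P) fX)).Homotopy (fY.comp .snd)) (p : P) (y : I × A) :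
    (lift g F p).1.2 y = F (y.1, (p, y.2)) := rfl

theorem lift_homotopic_lift {g : C(P × X, Y)}
    {F₀ F₁ : (g.comp (.prodMap (.id P) fX)).Homotopy (fY.comp .snd)}
    (h : F₀.toContinuousMap.HomotopicRel F₁.toContinuousMap (relEnds (P × A))) :
    (lift g F₀).Homotopic (lift g F₁) := by
  obtain ⟨Γ⟩ := h
  exact ⟨{
    toContinuousMap := lift (g.comp (.prodMap .snd (.id X)))
      { toFun := fun y => Γ (y.2.1.1, (y.1, (y.2.1.2, y.2.2)))
        map_zero_left := fun y => (Γ.eq_fst _ (.inl rfl)).trans (F₀.apply_zero _)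
        map_one_left := fun y => (Γ.eq_fst _ (.inr rfl)).trans (F₀.apply_one _) }
    map_zero_left := fun p => ext (fun _ => rfl) fun _ => Γ.apply_zero _
    map_one_left := fun p => ext (fun _ => rfl) fun _ => Γ.apply_one _ }⟩

variable [LocallyCompactSpace A] [LocallyCompactSpace X]

variable (fX fY) in
def eval : C(MapH fX fY × X, Y) := ⟨fun q => q.1.1.1 q.2, by fun_prop⟩

variable (fX fY) in
def evalHomotopy : ((eval fX fY).comp (.prodMap (.id _) fX)).Homotopy (fY.comp .snd) where
  toFun y := y.2.1.1.2 (y.1, y.2.2)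
  map_zero_left y := y.1.2.1 y.2
  map_one_left y := y.1.2.2 y.2

@[simp]
theorem evalHomotopy_apply (y : I × (MapH fX fY × A)) :
    evalHomotopy fX fY y = y.2.1.1.2 (y.1, y.2.2) := rfl

theorem lift_eval_evalHomotopy : lift (eval fX fY) (evalHomotopy fX fY) = .id _ :=
  ContinuousMap.ext fun _ => ext (fun _ => rfl) fun _ => rfl

variable (fX)

/-- The map `(g, F) ↦ (φ ∘ g, K · φF)`. -/
noncomputable def postcomp {Y' : Type} [TopologicalSpace Y'] {fY' : C(A, Y')} (φ : C(Y, Y'))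
    (K : (φ.comp fY).Homotopy fY') : C(MapH fX fY, MapH fX fY') :=
  lift (φ.comp (eval fX fY))
    (((ContinuousMap.Homotopy.refl φ).comp (evalHomotopy fX fY)).trans (K.comp (.refl .snd)))

theorem lift_trans_homotopic_of_homotopy_id {h : C(Y, Y)} (G : h.Homotopy (.id Y)) :
    (lift (fY := fY) (h.comp (eval fX fY))
      (((ContinuousMap.Homotopy.refl h).comp (evalHomotopy fX fY)).trans
        ((G.comp (.refl (fY.comp .snd))).cast rfl (ContinuousMap.id_comp _)))).Homotopic
    (lift (eval fX fY) ((evalHomotopy fX fY).trans (.refl (fY.comp .snd)))) := by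
  -- at time `s`: `(G_s ∘ g, (t ↦ G_{1 - (1 - s)(1 - t)} ∘ f_Y) · (G_s ∘ F))`
  let A₁ : (G.toContinuousMap.comp
        ⟨fun y : (I × MapH fX fY) × A => (y.1.1, y.1.2.1.1 (fX y.2)), by fun_prop⟩).Homotopy
      (G.toContinuousMap.comp (.prodMap (.fst : C(I × MapH fX fY, I)) fY)) :=
    { toFun := fun y => G (y.2.1.1, y.2.1.2.1.2 (y.1, y.2.2))
      map_zero_left := fun y => congrArg (fun w => G (y.1.1, w)) (y.1.2.2.1 y.2)
      map_one_left := fun y => congrArg (fun w => G (y.1.1, w)) (y.1.2.2.2 y.2) }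
  let A₂ : (G.toContinuousMap.comp (.prodMap (.fst : C(I × MapH fX fY, I)) fY)).Homotopy
      (fY.comp .snd) :=
    { toFun := fun y => G (σ (σ y.2.1.1 * σ y.1), fY y.2.2)
      map_zero_left := fun y => by simp only [symm_zero, mul_one, symm_symm]; rfl
      map_one_left := fun y => by simp }
  have hA₁ : ∀ t s p a, A₁ (t, ((s, p), a)) = G (s, p.1.2 (t, a)) := fun _ _ _ _ => rfl
  have hA₂ : ∀ t s p a, A₂ (t, ((s, p), a)) = G (σ (σ s * σ t), fY a) := fun _ _ _ _ => rfl
  refine ⟨{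
    toContinuousMap := lift (G.toContinuousMap.comp
      ⟨fun y : (I × MapH fX fY) × X => (y.1.1, y.1.2.1.1 y.2), by fun_prop⟩) (A₁.trans A₂)
    map_zero_left := fun p => ext (fun _ => G.apply_zero _) fun y => ?_
    map_one_left := fun p => ext (fun _ => G.apply_one _) fun y => ?_ }⟩
  · show (A₁.trans A₂) (y.1, ((0, p), y.2)) = _
    simp [Homotopy.trans_apply, hA₁, hA₂]
  · show (A₁.trans A₂) (y.1, ((1, p), y.2)) = _
    simp [Homotopy.trans_apply, hA₁, hA₂]

theorem postcomp_comp_postcomp_homotopic_id {Y' : Type} [TopologicalSpace Y'] {fY' : C(A, Y')}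
    (E : UnderHtpyEquiv fY fY') :
    ((postcomp fX E.ψ E.L).comp (postcomp fX E.φ E.K)).Homotopic (.id _) := by
  let ev := evalHomotopy fX fY
  let K' := E.K.comp (.refl (.snd : C(MapH fX fY × A, A)))
  let L' := E.L.comp (.refl (.snd : C(MapH fX fY × A, A)))
  let ψφev := (ContinuousMap.Homotopy.refl E.ψ).comp ((ContinuousMap.Homotopy.refl E.φ).comp ev)
  have assoc : HomotopicRel
      (((ContinuousMap.Homotopy.refl E.ψ).comp
        (((ContinuousMap.Homotopy.refl E.φ).comp ev).trans K')).trans L').toContinuousMap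
      (ψφev.trans (((ContinuousMap.Homotopy.refl E.ψ).comp K').trans L')).toContinuousMap
      (relEnds _) :=
    Homotopy.homotopicRel_of_reparam
      (Path.Homotopy.continuous_transAssocReparamAux.subtype_mk _)
      (Subtype.ext Path.Homotopy.transAssocReparamAux_zero)
      (Subtype.ext Path.Homotopy.transAssocReparamAux_one) fun x => by
        rw [Homotopy.refl_comp_trans]
        exact Homotopy.trans_trans_apply _ _ _ x
  have rel : HomotopicRel
      (ψφev.trans (((ContinuousMap.Homotopy.refl E.ψ).comp K').trans L')).toContinuousMap
      (ψφev.trans ((E.G.comp (.refl (fY.comp .snd))).cast rfl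
        (ContinuousMap.id_comp _))).toContinuousMap
      (relEnds _) :=
    Homotopy.homotopicRel_trans_right _ (Homotopy.homotopicRel_comp_refl E.rel_left .snd)
  have unit : HomotopicRel (ev.trans (.refl (fY.comp .snd))).toContinuousMap ev.toContinuousMap
      (relEnds _) :=
    Homotopy.homotopicRel_of_reparam (Path.Homotopy.continuous_transReflReparamAux.subtype_mk _)
      (Subtype.ext Path.Homotopy.transReflReparamAux_zero)
      (Subtype.ext Path.Homotopy.transReflReparamAux_one) (Homotopy.trans_refl_apply _)
  -- `Ψ ∘ Φ` is by definition the `lift` of the left-hand side of `assoc`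
  have h := (lift_homotopic_lift (assoc.trans rel)).trans
    ((lift_trans_homotopic_of_homotopy_id fX E.G).trans (lift_homotopic_lift unit))
  rwa [lift_eval_evalHomotopy] at h

end MapH

theorem mapH_homotopyEquiv_of_underHtpyEquiv_general
    {A X Y Y' : Type} [TopologicalSpace A] [TopologicalSpace X] [TopologicalSpace Y]
    [TopologicalSpace Y']
    [CompactSpace A] [T2Space A] [CompactSpace X] [T2Space X]
    (fX : C(A, X)) (fY : C(A, Y)) (fY' : C(A, Y'))
    (E : UnderHtpyEquiv fY fY') :
    ∃ (Φ : C(MapH fX fY, MapH fX fY')) (Ψ : C(MapH fX fY', MapH fX fY)),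
      (∀ p : MapH fX fY,
        (Φ p).1.1 = E.φ.comp p.1.1 ∧
        (Φ p).1.2 =
          (((ContinuousMap.Homotopy.refl E.φ).comp
            (⟨p.1.2, p.2.1, p.2.2⟩ : ContinuousMap.Homotopy (p.1.1.comp fX) fY)).trans E.K).toContinuousMap) ∧
      (∀ q : MapH fX fY',
        (Ψ q).1.1 = E.ψ.comp q.1.1 ∧
        (Ψ q).1.2 =
          (((ContinuousMap.Homotopy.refl E.ψ).comp
            (⟨q.1.2, q.2.1, q.2.2⟩ : ContinuousMap.Homotopy (q.1.1.comp fX) fY')).trans E.L).toContinuousMap) ∧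
      (Ψ.comp Φ).Homotopic (ContinuousMap.id _) ∧
      (Φ.comp Ψ).Homotopic (ContinuousMap.id _) :=
  ⟨MapH.postcomp fX E.φ E.K, MapH.postcomp fX E.ψ E.L, fun _ => ⟨rfl, rfl⟩, fun _ => ⟨rfl, rfl⟩,
    MapH.postcomp_comp_postcomp_homotopic_id fX E, MapH.postcomp_comp_postcomp_homotopic_id fX E.symm⟩

/-- Given a homotopy equivalence `(φ, ψ, G, H, K, L)` from `(Y, f_Y)` to `(Ỹ, f_Ỹ)`, the
maps `Φ(g,F) = (φ∘g, K·(φ∘F))` and `Ψ(g̃,F̃) = (ψ∘g̃, L·(ψ∘F̃))` are well-defined continuous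
maps `Map_f^h(X,Y) ⇄ Map_f^h(X,Ỹ)` and are inverse homotopy equivalences. -/
theorem mapH_homotopyEquiv_of_underHtpyEquiv
    {A X Y Y' : Type} [TopologicalSpace A] [TopologicalSpace X] [TopologicalSpace Y]
    [TopologicalSpace Y']
    [CompactSpace A] [T2Space A] [CompactSpace X] [T2Space X]
    [CompactSpace Y] [T2Space Y] [CompactSpace Y'] [T2Space Y']
    (fX : C(A, X)) (fY : C(A, Y)) (fY' : C(A, Y'))
    (E : UnderHtpyEquiv fY fY') :
    ∃ (Φ : C(MapH fX fY, MapH fX fY')) (Ψ : C(MapH fX fY', MapH fX fY)),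
      (∀ p : MapH fX fY,
        (Φ p).1.1 = E.φ.comp p.1.1 ∧
        (Φ p).1.2 =
          (((ContinuousMap.Homotopy.refl E.φ).comp
            (⟨p.1.2, p.2.1, p.2.2⟩ : ContinuousMap.Homotopy (p.1.1.comp fX) fY)).trans E.K).toContinuousMap) ∧
      (∀ q : MapH fX fY',
        (Ψ q).1.1 = E.ψ.comp q.1.1 ∧
        (Ψ q).1.2 =
          (((ContinuousMap.Homotopy.refl E.ψ).comp
            (⟨q.1.2, q.2.1, q.2.2⟩ : ContinuousMap.Homotopy (q.1.1.comp fX) fY')).trans E.L).toContinuousMap) ∧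
      (Ψ.comp Φ).Homotopic (ContinuousMap.id _) ∧
      (Φ.comp Ψ).Homotopic (ContinuousMap.id _) :=
  mapH_homotopyEquiv_of_underHtpyEquiv_general fX fY fY' E
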